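/- Let f be a piecewise contracting interval map with D ⊂ X̃ and x ∈ X̃. Then ω(x) is a periodic orbit contained in X̃ if and only if Δ_lr(x) = ∅, i.e. no interior boundary point is left-right recurrently visited by the orbit of x. -/

import Mathlib

open Filter Topology Set

/-- A piecewise contracting interval map on `X = [c 0, c N]` with contraction pieces
`X_i` delimited by the points `c 0 < c 1 < … < c N`, contraction rate `lam ∈ (0,1)`,
and `fe i` the (unique) continuous `lam`-Lipschitz extension of `f` restricted to the
`i`-th piece to its closure `[c (i-1), c i]`. The pieces are
`X_1 = [c 0, c 1)`, `X_i = (c (i-1), c i)` for `1 < i < N`, `X_N = (c (N-1), c N]`. -/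
structure PCIM where
  N : ℕ
  hN : 2 ≤ N
  c : ℕ → ℝ
  lam : ℝ
  f : ℝ → ℝ
  fe : ℕ → ℝ → ℝ
  hc : StrictMonoOn c (Set.Iic N)
  hlam : lam ∈ Set.Ioo (0 : ℝ) 1
  hmap : Set.MapsTo f (Set.Icc (c 0) (c N)) (Set.Icc (c 0) (c N))
  hfe_lip : ∀ i, 1 ≤ i → i ≤ N →
    ∀ x ∈ Set.Icc (c (i - 1)) (c i), ∀ y ∈ Set.Icc (c (i - 1)) (c i),
      |fe i x - fe i y| ≤ lam * |x - y|
  hfe_eq : ∀ i, 1 ≤ i → i ≤ N → ∀ x ∈ Set.Ioo (c (i - 1)) (c i), fe i x = f x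
  hfe_left : fe 1 (c 0) = f (c 0)
  hfe_right : fe N (c N) = f (c N)

namespace PCIM

variable (P : PCIM)

/-- The phase space `X = [c 0, c N]`. -/
def X : Set ℝ := Set.Icc (P.c 0) (P.c P.N)

/-- The `i`-th contraction piece (`1 ≤ i ≤ N`). -/
def piece (i : ℕ) : Set ℝ :=
  Set.Ioo (P.c (i - 1)) (P.c i)
    ∪ (if i = 1 then {P.c 0} else (∅ : Set ℝ))
    ∪ (if i = P.N then {P.c P.N} else (∅ : Set ℝ))

/-- `Δ`, the set of interior boundary points of the pieces. -/
def Δ : Set ℝ := {y | ∃ i, 1 ≤ i ∧ i < P.N ∧ y = P.c i}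

/-- `X̃ = ⋂ n, f⁻ⁿ(X \ Δ)`: points whose whole forward orbit stays in `X` and avoids `Δ`. -/
def Xt : Set ℝ := {x | ∀ n : ℕ, P.f^[n] x ∈ P.X \ P.Δ}

/-- Forward orbit of `x`. -/
def orbit (x : ℝ) : Set ℝ := Set.range fun n : ℕ => P.f^[n] x

/-- The ω-limit set of `x`: limits of subsequences of the forward orbit. -/
def omega (x : ℝ) : Set ℝ :=
  {y | ∃ φ : ℕ → ℕ, StrictMono φ ∧
    Filter.Tendsto (fun n => P.f^[φ n] x) Filter.atTop (nhds y)}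

/-- `d_i^- = f_i (c_i)`, the left lateral limit of `f` at `c i`. -/
def dminus (i : ℕ) : ℝ := P.fe i (P.c i)

/-- `d_i^+ = f_{i+1} (c_i)`, the right lateral limit of `f` at `c i`. -/
def dplus (i : ℕ) : ℝ := P.fe (i + 1) (P.c i)

/-- `D⁻ = {d_1^-, …, d_{N-1}^-}`. -/
def Dminus : Set ℝ := {y | ∃ i, 1 ≤ i ∧ i < P.N ∧ y = P.dminus i}

/-- `D⁺ = {d_1^+, …, d_{N-1}^+}`. -/
def Dplus : Set ℝ := {y | ∃ i, 1 ≤ i ∧ i < P.N ∧ y = P.dplus i}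

/-- `D`, the set of all one-sided limits of `f` at endpoints of the pieces. -/
def D : Set ℝ := P.Dminus ∪ P.Dplus ∪ {P.fe 1 (P.c 0), P.fe P.N (P.c P.N)}

/-- `A` is pseudo-invariant: for every `x ∈ A` at least one one-sided limit of `f`
at `x` (i.e. some `fe i x` with `x` in the closure of the `i`-th piece) belongs to `A`. -/
def PseudoInvariant (A : Set ℝ) : Prop :=
  ∀ x ∈ A, ∃ i, 1 ≤ i ∧ i ≤ P.N ∧ x ∈ Set.Icc (P.c (i - 1)) (P.c i) ∧ P.fe i x ∈ A

/-- `F_i(A) = closure (f (A ∩ X_i))`. -/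
def Fmap (i : ℕ) (A : Set ℝ) : Set ℝ := closure (P.f '' (A ∩ P.piece i))

/-- For a word `w = [i_1, …, i_n]`, the set `F_{i_n} ∘ … ∘ F_{i_1} (X)`. -/
def atomOf (w : List ℕ) : Set ℝ := w.foldl (fun S i => P.Fmap i S) P.X

/-- `A` is an atom of generation `n`. -/
def IsAtomGen (n : ℕ) (A : Set ℝ) : Prop :=
  ∃ w : List ℕ, w.length = n ∧ (∀ i ∈ w, 1 ≤ i ∧ i ≤ P.N) ∧
    A = P.atomOf w ∧ A.Nonempty

/-- `Lam n` is `Λ_{n+1}` of the paper: `Λ_1 = closure (f(X \ Δ))`,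
`Λ_{n+1} = closure (f(Λ_n \ Δ))`. -/
def Lam (P : PCIM) : ℕ → Set ℝ
  | 0 => closure (P.f '' (P.X \ P.Δ))
  | n + 1 => closure (P.f '' (P.Lam n \ P.Δ))

/-- The attractor `Λ = ⋂_{n ≥ 1} Λ_n`. -/
def attractor : Set ℝ := ⋂ n : ℕ, P.Lam n

/-- `c i ∈ Δ_lr(x)`: the boundary point `c i` is left-right recurrently visited by the
orbit of `x`. -/
def lrVisited (x : ℝ) (i : ℕ) : Prop :=
  1 ≤ i ∧ i < P.N ∧
  ∃ l r : ℕ → ℕ, StrictMono l ∧ StrictMono r ∧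
    (∀ j, P.f^[l j] x ∈ P.piece i) ∧ (∀ j, P.f^[r j] x ∈ P.piece (i + 1)) ∧
    Filter.Tendsto (fun j => P.f^[l j] x) Filter.atTop (nhds (P.c i)) ∧
    Filter.Tendsto (fun j => P.f^[r j] x) Filter.atTop (nhds (P.c i))

/-- `c i ∈ Δ_lr`: `c i` is left-right recurrently visited by the orbit of some point
of `X̃`. -/
def inΔlr (i : ℕ) : Prop := ∃ x ∈ P.Xt, P.lrVisited x i

/-- The set `Δ_lr ⊆ Δ`. -/
def ΔlrSet : Set ℝ := {y | ∃ i, P.inΔlr i ∧ y = P.c i}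

/-- The relation `∼⁺` on `Δ_lr`: `c_i ∼⁺ c_j` iff `c_i = c_j` or
(`c_i ∈ Δ_lr(d_j^+)` and `c_j ∈ Δ_lr(d_i^+)`). -/
def simP (a b : ℝ) : Prop :=
  a = b ∨ ∃ i j, P.inΔlr i ∧ P.inΔlr j ∧ a = P.c i ∧ b = P.c j ∧
    P.lrVisited (P.dplus j) i ∧ P.lrVisited (P.dplus i) j

/-- The relation `≼⁺` (on representatives): `[c_i] ≼⁺ [c_j]` iff `[c_i] = [c_j]` or
`c_i ∈ Δ_lr(d_j^+)`. -/
def preP (a b : ℝ) : Prop :=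
  P.simP a b ∨ ∃ i j, P.inΔlr i ∧ P.inΔlr j ∧ a = P.c i ∧ b = P.c j ∧
    P.lrVisited (P.dplus j) i

/-- `[c i]` is a minimal class for the partial order `≼⁺`. -/
def MinimalClass (i : ℕ) : Prop :=
  P.inΔlr i ∧ ∀ j, P.inΔlr j → P.preP (P.c j) (P.c i) → P.simP (P.c j) (P.c i)

/-- `f` is injective on each contraction piece. -/
def InjPieces : Prop := ∀ i, 1 ≤ i → i ≤ P.N → Set.InjOn P.f (P.piece i)

/-- `f` is (strictly) increasing on each contraction piece. -/
def IncrPieces : Prop := ∀ i, 1 ≤ i → i ≤ P.N → StrictMonoOn P.f (P.piece i)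

/-- `x` is a periodic point of `f`. -/
def IsPeriodic (x : ℝ) : Prop := ∃ p : ℕ, 1 ≤ p ∧ P.f^[p] x = x

/-- `η` is the itinerary of `x`: `f^[n] x ∈ X_{η n}` for all `n`. -/
def IsItinerary (x : ℝ) (η : ℕ → ℕ) : Prop :=
  ∀ n, 1 ≤ η n ∧ η n ≤ P.N ∧ P.f^[n] x ∈ P.piece (η n)

end PCIM

/-- The word of length `n` of the sequence `η` starting at position `t`. -/
def wordAt (η : ℕ → ℕ) (t n : ℕ) : List ℕ := (List.range n).map fun m => η (t + m)

/-- The complexity function of the sequence `η`: the number of distinct words of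
length `n` occurring in `η`. -/
noncomputable def complexity (η : ℕ → ℕ) (n : ℕ) : ℕ := Set.ncard {w : List ℕ | ∃ t, w = wordAt η t n}

section AuxHelpers

private lemma tendsto_of_abs_lt_one_div {g : ℕ → ℝ} {a : ℝ}
    (h : ∀ t : ℕ, |g t - a| < 1 / (t + 1)) :
    Filter.Tendsto g Filter.atTop (nhds a) := by
  rw [tendsto_iff_dist_tendsto_zero]
  refine squeeze_zero (fun t => dist_nonneg) (fun t => ?_)
    tendsto_one_div_add_atTop_nhds_zero_nat
  rw [Real.dist_eq]
  exact (h t).le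

private lemma exists_pos_min (s : Finset ℕ) (g : ℕ → ℝ) (hg : ∀ i ∈ s, 0 < g i) :
    ∃ e : ℝ, 0 < e ∧ ∀ i ∈ s, e ≤ g i := by
  rcases s.eq_empty_or_nonempty with rfl | hne
  · exact ⟨1, one_pos, by simp⟩
  · obtain ⟨i0, hi0, hmin⟩ := s.exists_min_image g hne
    exact ⟨g i0, hg _ hi0, hmin⟩

private lemma mod_periodic {y : ℕ → ℝ} {k : ℕ} (hk : 1 ≤ k) (h : ∀ r, y (r + k) = y r) :
    ∀ m, y m = y (m % k) := by
  intro m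
  induction m using Nat.strong_induction_on with
  | _ m ih =>
    by_cases hm : m < k
    · rw [Nat.mod_eq_of_lt hm]
    · push_neg at hm
      calc y m = y ((m - k) + k) := by rw [Nat.sub_add_cancel hm]
        _ = y (m - k) := h _
        _ = y ((m - k) % k) := ih _ (by omega)
        _ = y (m % k) := by rw [Nat.mod_eq_sub_mod hm]

end AuxHelpers

namespace PCIM

variable (P : PCIM)

lemma c_lt {a b : ℕ} (h : a < b) (hb : b ≤ P.N) : P.c a < P.c b :=
  P.hc (Set.mem_Iic.mpr (h.le.trans hb)) (Set.mem_Iic.mpr hb) h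

lemma c_le {a b : ℕ} (h : a ≤ b) (hb : b ≤ P.N) : P.c a ≤ P.c b := by
  rcases h.lt_or_eq with h' | rfl
  · exact (P.c_lt h' hb).le
  · exact le_rfl

lemma mem_piece_of_Ioo {i : ℕ} {u : ℝ} (h : u ∈ Set.Ioo (P.c (i - 1)) (P.c i)) :
    u ∈ P.piece i := Or.inl (Or.inl h)

lemma c0_mem_piece1 : P.c 0 ∈ P.piece 1 := Or.inl (Or.inr (by simp))

lemma cN_mem_pieceN : P.c P.N ∈ P.piece P.N := Or.inr (by simp)

lemma piece_subset_Icc {i : ℕ} (h1 : 1 ≤ i) (h2 : i ≤ P.N) :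
    P.piece i ⊆ Set.Icc (P.c (i - 1)) (P.c i) := by
  have hN := P.hN
  intro u hu
  rcases hu with (hu | hu) | hu
  · exact Set.Ioo_subset_Icc_self hu
  · split_ifs at hu with hi
    · rw [Set.mem_singleton_iff] at hu
      subst hi
      rw [hu]
      exact ⟨le_rfl, P.c_le (by omega) (by omega)⟩
    · exact absurd hu (Set.notMem_empty u)
  · split_ifs at hu with hi
    · rw [Set.mem_singleton_iff] at hu
      subst hi
      rw [hu]
      exact ⟨P.c_le (Nat.sub_le _ _) le_rfl, le_rfl⟩
    · exact absurd hu (Set.notMem_empty u)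

lemma mem_piece_f_eq {i : ℕ} (h1 : 1 ≤ i) (h2 : i ≤ P.N) {u : ℝ} (hu : u ∈ P.piece i) :
    P.f u = P.fe i u := by
  rcases hu with (hu | hu) | hu
  · exact (P.hfe_eq i h1 h2 u hu).symm
  · split_ifs at hu with hi
    · rw [Set.mem_singleton_iff] at hu
      rw [hu, hi]
      exact P.hfe_left.symm
    · exact absurd hu (Set.notMem_empty u)
  · split_ifs at hu with hi
    · rw [Set.mem_singleton_iff] at hu
      rw [hu, hi]
      exact P.hfe_right.symm
    · exact absurd hu (Set.notMem_empty u)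

lemma contract {i : ℕ} (h1 : 1 ≤ i) (h2 : i ≤ P.N) {u v : ℝ}
    (hu : u ∈ P.piece i) (hv : v ∈ P.piece i) :
    |P.f u - P.f v| ≤ P.lam * |u - v| := by
  rw [P.mem_piece_f_eq h1 h2 hu, P.mem_piece_f_eq h1 h2 hv]
  exact P.hfe_lip i h1 h2 u (P.piece_subset_Icc h1 h2 hu) v (P.piece_subset_Icc h1 h2 hv)

lemma piece_lt {i : ℕ} (h2 : i < P.N) {u : ℝ} (hu : u ∈ P.piece i) : u < P.c i := by
  have hN := P.hN
  rcases hu with (hu | hu) | hu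
  · exact hu.2
  · split_ifs at hu with hi
    · rw [Set.mem_singleton_iff] at hu
      rw [hu, hi]
      exact P.c_lt (by omega) (by omega)
    · exact absurd hu (Set.notMem_empty u)
  · split_ifs at hu with hi
    · exact absurd hi (by omega)
    · exact absurd hu (Set.notMem_empty u)

lemma piece_gt {i : ℕ} (h1 : 2 ≤ i) (h2 : i ≤ P.N) {u : ℝ} (hu : u ∈ P.piece i) :
    P.c (i - 1) < u := by
  have hN := P.hN
  rcases hu with (hu | hu) | hu
  · exact hu.1
  · split_ifs at hu with hi
    · exact absurd hi (by omega)
    · exact absurd hu (Set.notMem_empty u)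
  · split_ifs at hu with hi
    · rw [Set.mem_singleton_iff] at hu
      rw [hu, hi]
      exact P.c_lt (by omega) le_rfl
    · exact absurd hu (Set.notMem_empty u)

lemma exists_piece {y : ℝ} (hy : y ∈ P.X) (hyd : y ∉ P.Δ) :
    ∃ i, 1 ≤ i ∧ i ≤ P.N ∧ y ∈ P.piece i := by
  classical
  have hN := P.hN
  obtain ⟨hy0, hyN⟩ := hy
  have hex : ∃ i, i ≤ P.N ∧ y ≤ P.c i := ⟨P.N, le_rfl, hyN⟩
  obtain ⟨hiN, hyi⟩ := Nat.find_spec hex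
  rcases Nat.eq_zero_or_pos (Nat.find hex) with h0 | hpos
  · rw [h0] at hyi
    have hy' : y = P.c 0 := le_antisymm hyi hy0
    exact ⟨1, le_rfl, by omega, by rw [hy']; exact P.c0_mem_piece1⟩
  · have hlt : P.c (Nat.find hex - 1) < y := by
      by_contra hcon
      push_neg at hcon
      exact Nat.find_min hex (by omega) ⟨by omega, hcon⟩
    rcases lt_or_eq_of_le hyi with h | h
    · exact ⟨Nat.find hex, hpos, hiN, P.mem_piece_of_Ioo ⟨hlt, h⟩⟩
    · by_cases hiN' : Nat.find hex = P.N
      · exact ⟨P.N, by omega, le_rfl, by rw [h, hiN']; exact P.cN_mem_pieceN⟩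
      · exact absurd ⟨Nat.find hex, hpos, by omega, h⟩ hyd

lemma lr_of_visits {x : ℝ} {i : ℕ} (h1 : 1 ≤ i) (h2 : i < P.N)
    (hL : ∀ ε : ℝ, 0 < ε → ∀ T : ℕ, ∃ m, T ≤ m ∧ P.f^[m] x ∈ P.piece i ∧
      |P.f^[m] x - P.c i| < ε)
    (hR : ∀ ε : ℝ, 0 < ε → ∀ T : ℕ, ∃ m, T ≤ m ∧ P.f^[m] x ∈ P.piece (i + 1) ∧
      |P.f^[m] x - P.c i| < ε) :
    P.lrVisited x i := by
  refine ⟨h1, h2, ?_⟩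
  obtain ⟨l, hl, hlp⟩ := Filter.extraction_forall_of_frequently
    (P := fun t m => P.f^[m] x ∈ P.piece i ∧ |P.f^[m] x - P.c i| < 1 / (t + 1))
    (fun t => Filter.frequently_atTop.mpr fun a => by
      obtain ⟨m, hm, h3, h4⟩ := hL (1 / (t + 1)) (by positivity) a
      exact ⟨m, hm, h3, h4⟩)
  obtain ⟨r, hr, hrp⟩ := Filter.extraction_forall_of_frequently
    (P := fun t m => P.f^[m] x ∈ P.piece (i + 1) ∧ |P.f^[m] x - P.c i| < 1 / (t + 1))
    (fun t => Filter.frequently_atTop.mpr fun a => by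
      obtain ⟨m, hm, h3, h4⟩ := hR (1 / (t + 1)) (by positivity) a
      exact ⟨m, hm, h3, h4⟩)
  exact ⟨l, r, hl, hr, fun j => (hlp j).1, fun j => (hrp j).1,
    tendsto_of_abs_lt_one_div (fun t => (hlp t).2),
    tendsto_of_abs_lt_one_div (fun t => (hrp t).2)⟩

lemma fe_eq_f_of_notDelta {i : ℕ} (h1 : 1 ≤ i) (h2 : i ≤ P.N) {w : ℝ}
    (hw : w ∈ Set.Icc (P.c (i - 1)) (P.c i)) (hd : w ∉ P.Δ) : P.fe i w = P.f w := by
  have hN := P.hN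
  rcases lt_or_eq_of_le hw.1 with hl | hl
  · rcases lt_or_eq_of_le hw.2 with hr | hr
    · exact P.hfe_eq i h1 h2 w ⟨hl, hr⟩
    · have hi : i = P.N := by
        by_contra hcon
        exact hd ⟨i, h1, by omega, hr⟩
      rw [hr, hi]
      exact P.hfe_right
  · have hi : i = 1 := by
      by_contra hcon
      exact hd ⟨i - 1, by omega, by omega, hl.symm⟩
    rw [← hl, hi]
    exact P.hfe_left

lemma asymptotically_periodic (P : PCIM) (hD : P.D ⊆ P.Xt) (x : ℝ) (hx : x ∈ P.Xt)
    (hno : ∀ i, ¬ P.lrVisited x i) :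
    ∃ p : ℝ, P.IsPeriodic p ∧ P.orbit p ⊆ P.Xt ∧ P.omega x = P.orbit p := by
  classical
  have hN := P.hN
  have hlam0 : (0:ℝ) < P.lam := P.hlam.1
  have hlam1 : P.lam < 1 := P.hlam.2
  have hxX : ∀ m : ℕ, P.f^[m] x ∈ P.X := fun m => (hx m).1
  have hxΔ : ∀ m : ℕ, P.f^[m] x ∉ P.Δ := fun m => (hx m).2
  -- Step A: one-sided avoidance near each boundary point
  have havoid : ∀ i : ℕ, ∃ (e : ℝ) (Ti : ℕ), 1 ≤ i → i < P.N →
      0 < e ∧ ((∀ m, Ti ≤ m → ¬(P.f^[m] x ∈ P.piece i ∧ |P.f^[m] x - P.c i| < e)) ∨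
               (∀ m, Ti ≤ m → ¬(P.f^[m] x ∈ P.piece (i+1) ∧ |P.f^[m] x - P.c i| < e))) := by
    intro i
    by_cases hi : 1 ≤ i ∧ i < P.N
    · by_contra hcon
      push_neg at hcon
      refine hno i (P.lr_of_visits hi.1 hi.2 ?_ ?_)
      · intro e he T
        obtain ⟨m, hm, hmem, hlt⟩ := (((hcon e T).2.2) he).1
        exact ⟨m, hm, hmem, hlt⟩
      · intro e he T
        obtain ⟨m, hm, hmem, hlt⟩ := (((hcon e T).2.2) he).2
        exact ⟨m, hm, hmem, hlt⟩
    · exact ⟨1, 0, fun h1' h2' => absurd ⟨h1', h2'⟩ hi⟩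
  choose ef Tf hef using havoid
  -- Step B: global ε and T
  have hpos : ∀ i ∈ Finset.Icc 1 (P.N - 1), 0 < min (ef i) (P.c (i+1) - P.c i) := by
    intro i hi
    rw [Finset.mem_Icc] at hi
    exact lt_min ((hef i (by omega) (by omega)).1)
      (sub_pos.mpr (P.c_lt (by omega) (by omega)))
  obtain ⟨ε, hε, hεle⟩ := exists_pos_min (Finset.Icc 1 (P.N - 1))
    (fun i => min (ef i) (P.c (i+1) - P.c i)) hpos
  set T : ℕ := (Finset.Icc 1 (P.N - 1)).sup Tf with hTdef
  have hTle : ∀ i ∈ Finset.Icc 1 (P.N - 1), Tf i ≤ T := fun i hi => Finset.le_sup hi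
  -- Step C: nearby orbit points (after time T) are in the same piece
  have hcore : ∀ (m m' : ℕ) (a b : ℕ), T ≤ m → T ≤ m' →
      |P.f^[m] x - P.f^[m'] x| < ε → 1 ≤ a → a ≤ P.N → 1 ≤ b → b ≤ P.N →
      P.f^[m] x ∈ P.piece a → P.f^[m'] x ∈ P.piece b → ¬ a < b := by
    intro m m' a b hm hm' hd ha1 haN hb1 hbN hpa hpb hab
    have h1 : P.f^[m] x < P.c a := P.piece_lt (by omega) hpa
    have h2 : P.c (b - 1) < P.f^[m'] x := P.piece_gt (by omega) hbN hpb
    have h3 : P.c a ≤ P.c (b - 1) := P.c_le (by omega) (by omega)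
    have habs := abs_sub_lt_iff.mp hd
    have haS : a ∈ Finset.Icc 1 (P.N - 1) := Finset.mem_Icc.mpr ⟨ha1, by omega⟩
    have hefa := hef a (by omega) (by omega)
    have hba : b = a + 1 := by
      by_contra hne
      have h4 : P.c (a + 1) ≤ P.c (b - 1) := P.c_le (by omega) (by omega)
      have h5 : ε ≤ P.c (a + 1) - P.c a := le_trans (hεle a haS) (min_le_right _ _)
      linarith [habs.2]
    have hεa : ε ≤ ef a := le_trans (hεle a haS) (min_le_left _ _)
    have hca : P.c (b - 1) = P.c a := by rw [hba, Nat.add_sub_cancel]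
    rw [hca] at h2
    have hua : |P.f^[m] x - P.c a| < ef a := by
      rw [abs_sub_lt_iff]
      constructor
      · linarith [hefa.1]
      · linarith [habs.2]
    have hva : |P.f^[m'] x - P.c a| < ef a := by
      rw [abs_sub_lt_iff]
      constructor
      · linarith [habs.2]
      · linarith [hefa.1]
    rcases hefa.2 with hA | hB
    · exact hA m (le_trans (hTle a haS) hm) ⟨hpa, hua⟩
    · rw [hba] at hpb
      exact hB m' (le_trans (hTle a haS) hm') ⟨hpb, hva⟩
  have hsame : ∀ (m m' a b : ℕ), T ≤ m → T ≤ m' → |P.f^[m] x - P.f^[m'] x| < ε →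
      1 ≤ a → a ≤ P.N → 1 ≤ b → b ≤ P.N →
      P.f^[m] x ∈ P.piece a → P.f^[m'] x ∈ P.piece b → a = b := by
    intro m m' a b hm hm' hd ha1 haN hb1 hbN hpa hpb
    rcases lt_trichotomy a b with h | h | h
    · exact absurd h (hcore m m' a b hm hm' hd ha1 haN hb1 hbN hpa hpb)
    · exact h
    · exact absurd h (hcore m' m b a hm' hm (by rwa [abs_sub_comm]) hb1 hbN ha1 haN hpb hpa)
  -- Step D: a close return
  have hcpt : IsCompact P.X := isCompact_Icc
  obtain ⟨z0, -, φ, hφ, hconv⟩ :=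
    hcpt.tendsto_subseq (x := fun j => P.f^[T + j] x) (fun j => hxX _)
  obtain ⟨J, hJ⟩ := Metric.cauchySeq_iff'.mp hconv.cauchySeq ε hε
  set n : ℕ := T + φ J with hn
  set m : ℕ := T + φ (J + 1) with hm
  have hnm : n < m := by
    have h9 : φ J < φ (J + 1) := hφ (by omega)
    omega
  have hTn : T ≤ n := by omega
  set k : ℕ := m - n with hk
  have hk1 : 1 ≤ k := by omega
  have hnk : n + k = m := by omega
  set δ : ℝ := |P.f^[n] x - P.f^[m] x| with hδ
  have hδ0 : 0 ≤ δ := abs_nonneg _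
  have hδε : δ < ε := by
    have h5 := hJ (J + 1) (Nat.le_succ J)
    simp only [Function.comp_apply] at h5
    rw [Real.dist_eq] at h5
    rw [hδ, hn, hm, abs_sub_comm]
    exact h5
  -- Step E: geometric decay of distances along the orbit
  have hdecay : ∀ j : ℕ, |P.f^[n + j] x - P.f^[n + j + k] x| ≤ P.lam ^ j * δ := by
    intro j
    induction j with
    | zero =>
      simp only [Nat.add_zero, pow_zero, one_mul]
      rw [hnk, hδ]
    | succ j ih =>
      have hlt : |P.f^[n + j] x - P.f^[n + j + k] x| < ε :=
        lt_of_le_of_lt (le_trans ih (mul_le_of_le_one_left hδ0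
          (pow_le_one₀ hlam0.le hlam1.le))) hδε
      obtain ⟨a, ha1, haN, hpa⟩ := P.exists_piece (hxX (n + j)) (hxΔ (n + j))
      obtain ⟨b, hb1, hbN, hpb⟩ := P.exists_piece (hxX (n + j + k)) (hxΔ (n + j + k))
      have hab : a = b :=
        hsame (n + j) (n + j + k) a b (by omega) (by omega) hlt ha1 haN hb1 hbN hpa hpb
      subst hab
      have e1 : n + (j + 1) = (n + j) + 1 := by omega
      have e2 : n + (j + 1) + k = (n + j + k) + 1 := by omega
      rw [e2, e1, Function.iterate_succ_apply', Function.iterate_succ_apply']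
      calc |P.f (P.f^[n + j] x) - P.f (P.f^[n + j + k] x)|
          ≤ P.lam * |P.f^[n + j] x - P.f^[n + j + k] x| := P.contract ha1 haN hpa hpb
        _ ≤ P.lam * (P.lam ^ j * δ) := mul_le_mul_of_nonneg_left ih hlam0.le
        _ = P.lam ^ (j + 1) * δ := by ring
  -- Step F: limits along arithmetic progressions
  have hlamk : P.lam ^ k < 1 := pow_lt_one₀ hlam0.le hlam1 (by omega)
  have hlamkpos : 0 < 1 - P.lam ^ k := by
    have : 0 < P.lam ^ k := pow_pos hlam0 k
    linarith
  have hgeo : ∀ r j : ℕ,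
      dist (P.f^[n + r + j * k] x) (P.f^[n + r + (j + 1) * k] x)
        ≤ (P.lam ^ r * δ) * (P.lam ^ k) ^ j := by
    intro r j
    have e1 : n + r + j * k = n + (r + k * j) := by ring
    have e2 : n + r + (j + 1) * k = n + (r + k * j) + k := by ring
    rw [Real.dist_eq, e1, e2]
    refine le_trans (hdecay (r + k * j)) (le_of_eq ?_)
    rw [pow_add, pow_mul]
    ring
  have hy' : ∀ r : ℕ, ∃ zr : ℝ,
      Filter.Tendsto (fun j => P.f^[n + r + j * k] x) Filter.atTop (nhds zr) :=
    fun r => cauchySeq_tendsto_of_complete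
      (cauchySeq_of_le_geometric (P.lam ^ k) (P.lam ^ r * δ) hlamk (hgeo r))
  choose y hy using hy'
  have hyper : ∀ r, y (r + k) = y r := by
    intro r
    have h1 : Filter.Tendsto (fun j => P.f^[n + r + (j + 1) * k] x) Filter.atTop
        (nhds (y r)) := (hy r).comp (Filter.tendsto_add_atTop_nat 1)
    have h2 : Filter.Tendsto (fun j => P.f^[n + r + (j + 1) * k] x) Filter.atTop
        (nhds (y (r + k))) := by
      refine (hy (r + k)).congr (fun j => ?_)
      exact congrArg (fun t => P.f^[t] x)
        (by ring : n + (r + k) + j * k = n + r + (j + 1) * k)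
    exact tendsto_nhds_unique h2 h1
  have hydist : ∀ r, |P.f^[n + r] x - y r| ≤ P.lam ^ r * δ / (1 - P.lam ^ k) := by
    intro r
    have h6 := dist_le_of_le_geometric_of_tendsto₀ (P.lam ^ k) (P.lam ^ r * δ)
      hlamk (hgeo r) (hy r)
    rw [Real.dist_eq] at h6
    simpa using h6
  have hyX : ∀ r, y r ∈ P.X := by
    intro r
    have hXc : IsClosed P.X := isClosed_Icc
    exact hXc.mem_of_tendsto (hy r) (Filter.Eventually.of_forall fun j => hxX _)
  have hball : ∀ (r : ℕ) (b : ℝ), 0 < b →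
      ∀ᶠ j in Filter.atTop, |P.f^[n + r + j * k] x - y r| < b := by
    intro r b hb
    refine ((hy r).eventually_mem (Metric.ball_mem_nhds (y r) hb)).mono fun j hj => ?_
    rwa [Metric.mem_ball, Real.dist_eq] at hj
  have hjk : ∀ j : ℕ, j ≤ j * k :=
    fun j => le_trans (Nat.le_of_eq (Nat.mul_one j).symm) (Nat.mul_le_mul_left j hk1)
  -- Step G: the structure of consecutive limits
  have hstep : ∀ r : ℕ, ∃ s', 1 ≤ s' ∧ s' ≤ P.N ∧
      y r ∈ Set.Icc (P.c (s' - 1)) (P.c s') ∧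
      (∀ᶠ j in Filter.atTop, P.f^[n + r + j * k] x ∈ P.piece s') := by
    intro r
    by_cases hΔr : y r ∈ P.Δ
    · obtain ⟨i, hi1, hiN, hyc⟩ := hΔr
      have hgapL : 0 < P.c i - P.c (i - 1) := sub_pos.mpr (P.c_lt (by omega) (by omega))
      have hgapR : 0 < P.c (i + 1) - P.c i := sub_pos.mpr (P.c_lt (by omega) (by omega))
      have hne_ci : ∀ j, P.f^[n + r + j * k] x ≠ P.c i :=
        fun j h => hxΔ _ ⟨i, hi1, hiN, h⟩
      have hballi : ∀ b : ℝ, 0 < b →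
          ∀ᶠ j in Filter.atTop, |P.f^[n + r + j * k] x - P.c i| < b := by
        intro b hb
        have h7 := hball r b hb
        rwa [hyc] at h7
      have honeside : (∀ᶠ j in Filter.atTop, P.f^[n + r + j * k] x < P.c i) ∨
          (∀ᶠ j in Filter.atTop, P.c i < P.f^[n + r + j * k] x) := by
        by_contra hcon
        push_neg at hcon
        obtain ⟨hc1, hc2⟩ := hcon
        replace hc1 : ∃ᶠ j in Filter.atTop, ¬ (P.f^[n + r + j * k] x < P.c i) :=
          hc1.mono fun j hj => not_lt.mpr hj
        replace hc2 : ∃ᶠ j in Filter.atTop, ¬ (P.c i < P.f^[n + r + j * k] x) :=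
          hc2.mono fun j hj => not_lt.mpr hj
        have hfreqR : ∃ᶠ j in Filter.atTop, P.c i < P.f^[n + r + j * k] x :=
          hc1.mono fun j hj => lt_of_le_of_ne (not_lt.mp hj) (hne_ci j).symm
        have hfreqL : ∃ᶠ j in Filter.atTop, P.f^[n + r + j * k] x < P.c i :=
          hc2.mono fun j hj => lt_of_le_of_ne (not_lt.mp hj) (hne_ci j)
        refine hno i (P.lr_of_visits hi1 hiN ?_ ?_)
        · intro e he T'
          have hev := (hballi (min e (P.c i - P.c (i - 1))) (lt_min he hgapL)).and
            (Filter.eventually_ge_atTop T')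
          obtain ⟨j, hjlt, hjab, hjT⟩ := (hfreqL.and_eventually hev).exists
          have hlow := abs_sub_lt_iff.mp hjab
          refine ⟨n + r + j * k,
            le_trans hjT (le_trans (hjk j) (Nat.le_add_left _ _)),
            P.mem_piece_of_Ioo ⟨by linarith [hlow.2, min_le_right e (P.c i - P.c (i - 1))], hjlt⟩,
            lt_of_lt_of_le hjab (min_le_left _ _)⟩
        · intro e he T'
          have hev := (hballi (min e (P.c (i + 1) - P.c i)) (lt_min he hgapR)).and
            (Filter.eventually_ge_atTop T')
          obtain ⟨j, hjlt, hjab, hjT⟩ := (hfreqR.and_eventually hev).exists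
          have hlow := abs_sub_lt_iff.mp hjab
          refine ⟨n + r + j * k,
            le_trans hjT (le_trans (hjk j) (Nat.le_add_left _ _)),
            P.mem_piece_of_Ioo (i := i + 1) ⟨by simpa using hjlt, ?_⟩,
            lt_of_lt_of_le hjab (min_le_left _ _)⟩
          have : P.f^[n + r + j * k] x < P.c (i + 1) := by
            linarith [hlow.1, min_le_right e (P.c (i + 1) - P.c i)]
          exact this
      rcases honeside with hside | hside
      · refine ⟨i, hi1, by omega, ?_, ?_⟩
        · rw [hyc]
          exact ⟨P.c_le (by omega) (by omega), le_rfl⟩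
        · filter_upwards [hside, hballi (P.c i - P.c (i - 1)) hgapL] with j hj1 hj2
          have hlow := abs_sub_lt_iff.mp hj2
          exact P.mem_piece_of_Ioo ⟨by linarith [hlow.2], hj1⟩
      · refine ⟨i + 1, by omega, by omega, ?_, ?_⟩
        · rw [hyc]
          refine ⟨le_of_eq ?_, P.c_le (by omega) (by omega)⟩
          simp
        · filter_upwards [hside, hballi (P.c (i + 1) - P.c i) hgapR] with j hj1 hj2
          have hlow := abs_sub_lt_iff.mp hj2
          refine P.mem_piece_of_Ioo (i := i + 1) ⟨by simpa using hj1, ?_⟩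
          have : P.f^[n + r + j * k] x < P.c (i + 1) := by linarith [hlow.1]
          exact this
    · obtain ⟨s', hs1, hsN, hps⟩ := P.exists_piece (hyX r) hΔr
      refine ⟨s', hs1, hsN, P.piece_subset_Icc hs1 hsN hps, ?_⟩
      rcases hps with (hio | hc0) | hcN
      · exact ((hy r).eventually_mem (isOpen_Ioo.mem_nhds hio)).mono
          fun j hj => P.mem_piece_of_Ioo hj
      · split_ifs at hc0 with hs1'
        · rw [Set.mem_singleton_iff] at hc0
          subst hs1'
          have hev : ∀ᶠ j in Filter.atTop, P.f^[n + r + j * k] x < P.c 1 := by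
            have hnn : Set.Iio (P.c 1) ∈ nhds (y r) :=
              Iio_mem_nhds (by rw [hc0]; exact P.c_lt (by omega) (by omega))
            exact (hy r).eventually_mem hnn
          refine hev.mono fun j hj => ?_
          rcases eq_or_lt_of_le (hxX (n + r + j * k)).1 with he | hlt'
          · rw [← he]; exact P.c0_mem_piece1
          · exact P.mem_piece_of_Ioo ⟨hlt', hj⟩
        · exact absurd hc0 (Set.notMem_empty _)
      · split_ifs at hcN with hsN'
        · rw [Set.mem_singleton_iff] at hcN
          subst hsN'
          have hev : ∀ᶠ j in Filter.atTop, P.c (P.N - 1) < P.f^[n + r + j * k] x := by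
            have hnn : Set.Ioi (P.c (P.N - 1)) ∈ nhds (y r) :=
              Ioi_mem_nhds (by rw [hcN]; exact P.c_lt (by omega) le_rfl)
            exact (hy r).eventually_mem hnn
          refine hev.mono fun j hj => ?_
          rcases eq_or_lt_of_le (hxX (n + r + j * k)).2 with he | hlt'
          · rw [he]; exact P.cN_mem_pieceN
          · exact P.mem_piece_of_Ioo ⟨hj, hlt'⟩
        · exact absurd hcN (Set.notMem_empty _)
  have hstep' : ∀ r : ℕ, ∃ s', 1 ≤ s' ∧ s' ≤ P.N ∧
      y r ∈ Set.Icc (P.c (s' - 1)) (P.c s') ∧ y (r + 1) = P.fe s' (y r) := by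
    intro r
    obtain ⟨s', hs1, hsN, hicc, hev⟩ := hstep r
    refine ⟨s', hs1, hsN, hicc, ?_⟩
    have h3 : Filter.Tendsto (fun j => P.fe s' (P.f^[n + r + j * k] x)) Filter.atTop
        (nhds (P.fe s' (y r))) := by
      rw [tendsto_iff_dist_tendsto_zero]
      refine squeeze_zero' (g := fun j => P.lam * |P.f^[n + r + j * k] x - y r|)
        (Filter.Eventually.of_forall fun _ => dist_nonneg) ?_ ?_
      · filter_upwards [hev] with j hj
        rw [Real.dist_eq]
        exact P.hfe_lip s' hs1 hsN _ (P.piece_subset_Icc hs1 hsN hj) _ hicc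
      · have h4 : Filter.Tendsto (fun j => |P.f^[n + r + j * k] x - y r|) Filter.atTop
            (nhds 0) := by
          have h5 := tendsto_iff_dist_tendsto_zero.mp (hy r)
          simpa [Real.dist_eq] using h5
        simpa using h4.const_mul P.lam
    have h4 : ∀ᶠ j in Filter.atTop,
        P.f^[n + (r + 1) + j * k] x = P.fe s' (P.f^[n + r + j * k] x) := by
      filter_upwards [hev] with j hj
      rw [← P.mem_piece_f_eq hs1 hsN hj]
      have e : n + (r + 1) + j * k = (n + r + j * k) + 1 := by ring
      rw [e, Function.iterate_succ_apply']
    exact tendsto_nhds_unique_of_eventuallyEq (hy (r + 1)) h3 h4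
  -- Step H: none of the limit points is a boundary point
  have hyΔ : ∀ r, y r ∉ P.Δ := by
    intro r hΔr
    obtain ⟨i, hi1, hiN, hyc⟩ := hΔr
    obtain ⟨s', hs1, hsN, hicc, hfeq⟩ := hstep' r
    have hle1 : P.c (s' - 1) ≤ P.c i := by rw [← hyc]; exact hicc.1
    have hle2 : P.c i ≤ P.c s' := by rw [← hyc]; exact hicc.2
    have hsle : s' - 1 ≤ i := by
      by_contra hcon
      push_neg at hcon
      exact absurd hle1 (not_le.mpr (P.c_lt hcon (by omega)))
    have hsge : i ≤ s' := by
      by_contra hcon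
      push_neg at hcon
      exact absurd hle2 (not_le.mpr (P.c_lt hcon (by omega)))
    have hyD : y (r + 1) ∈ P.D := by
      rcases (by omega : s' = i ∨ s' = i + 1) with h | h
      · exact Or.inl (Or.inl ⟨i, hi1, hiN, by rw [hfeq, hyc, h]; rfl⟩)
      · exact Or.inl (Or.inr ⟨i, hi1, hiN, by rw [hfeq, hyc, h]; rfl⟩)
    have hyXt1 : y (r + 1) ∈ P.Xt := hD hyD
    have hiter : ∀ t, y (r + 1 + t) = P.f^[t] (y (r + 1)) := by
      intro t
      induction t with
      | zero => simp
      | succ t ih =>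
        obtain ⟨s2, h1', h2', hicc', hfeq'⟩ := hstep' (r + 1 + t)
        have hnd : y (r + 1 + t) ∉ P.Δ := by
          rw [ih]; exact (hyXt1 t).2
        have e : r + 1 + (t + 1) = (r + 1 + t) + 1 := by omega
        rw [e, hfeq', P.fe_eq_f_of_notDelta h1' h2' hicc' hnd, ih]
        exact (Function.iterate_succ_apply' P.f t (y (r + 1))).symm
    have hyrk : y r = P.f^[k - 1] (y (r + 1)) := by
      have e : r + k = r + 1 + (k - 1) := by omega
      rw [← hyper r, e, hiter]
    exact (hyXt1 (k - 1)).2 (by rw [← hyrk]; exact ⟨i, hi1, hiN, hyc⟩)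
  have hstep2 : ∀ r, y (r + 1) = P.f (y r) := by
    intro r
    obtain ⟨s', hs1, hsN, hicc, hfeq⟩ := hstep' r
    rw [hfeq, P.fe_eq_f_of_notDelta hs1 hsN hicc (hyΔ r)]
  have hyit : ∀ t, y t = P.f^[t] (y 0) := by
    intro t
    induction t with
    | zero => simp
    | succ t ih =>
      rw [hstep2 t, ih]
      exact (Function.iterate_succ_apply' P.f t (y 0)).symm
  have hmod : ∀ t, y t = y (t % k) := mod_periodic hk1 hyper
  refine ⟨y 0, ⟨k, hk1, by rw [← hyit k]; simpa using hyper 0⟩, ?_, ?_⟩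
  · rintro z ⟨t, rfl⟩
    show ∀ t' : ℕ, P.f^[t'] (P.f^[t] (y 0)) ∈ P.X \ P.Δ
    intro t'
    rw [← Function.iterate_add_apply, ← hyit (t' + t)]
    exact ⟨hyX _, hyΔ _⟩
  · apply Set.eq_of_subset_of_subset
    · rintro z ⟨φ', hφ', hlim⟩
      have hφge : ∀ j, n ≤ φ' (j + n) := fun j => le_trans (Nat.le_add_left n j) hφ'.le_apply
      set mj : ℕ → ℕ := fun j => φ' (j + n) - n with hmjdef
      have hmj : ∀ j, n + mj j = φ' (j + n) := fun j => Nat.add_sub_cancel' (hφge j)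
      have hmjge : ∀ j, j ≤ mj j := by
        intro j
        have h8 : j + n ≤ φ' (j + n) := hφ'.le_apply
        simp only [hmjdef]
        omega
      have ha : Filter.Tendsto (fun j => P.f^[n + mj j] x) Filter.atTop (nhds z) := by
        have h1 : Filter.Tendsto (fun j => P.f^[φ' (j + n)] x) Filter.atTop (nhds z) :=
          hlim.comp (Filter.tendsto_add_atTop_nat n)
        exact h1.congr fun j => by rw [hmj j]
      have hd0 : Filter.Tendsto (fun j => |P.f^[n + mj j] x - y (mj j)|) Filter.atTop
          (nhds 0) := by
        have hg : Filter.Tendsto (fun j : ℕ => P.lam ^ j * δ / (1 - P.lam ^ k))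
            Filter.atTop (nhds 0) := by
          have h0 := tendsto_pow_atTop_nhds_zero_of_lt_one hlam0.le hlam1
          simpa using (h0.mul_const δ).div_const (1 - P.lam ^ k)
        refine squeeze_zero (fun j => abs_nonneg _) (fun j => ?_) hg
        refine le_trans (hydist (mj j)) ?_
        rw [div_eq_mul_inv, div_eq_mul_inv]
        refine mul_le_mul_of_nonneg_right ?_ (inv_nonneg.mpr hlamkpos.le)
        exact mul_le_mul_of_nonneg_right
          (pow_le_pow_of_le_one hlam0.le hlam1.le (hmjge j)) hδ0
      have hlim2 : Filter.Tendsto (fun j => y (mj j)) Filter.atTop (nhds z) := by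
        have h5 : Filter.Tendsto (fun j => P.f^[n + mj j] x - y (mj j)) Filter.atTop
            (nhds 0) := by
          have hminus : Filter.Tendsto
              (fun j => -|P.f^[n + mj j] x - y (mj j)|) Filter.atTop (nhds 0) := by
            simpa using hd0.neg
          exact tendsto_of_tendsto_of_tendsto_of_le_of_le hminus hd0
            (fun j => neg_abs_le _) (fun j => le_abs_self _)
        have h6 := ha.sub h5
        simpa using h6
      have hfreq : ∃ r₀, r₀ < k ∧ ∃ᶠ j in Filter.atTop, mj j % k = r₀ := by
        by_contra hcon
        push_neg at hcon
        have hev : ∀ᶠ j in Filter.atTop, ∀ r₀ ∈ Finset.range k, mj j % k ≠ r₀ := by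
          rw [Filter.eventually_all_finset]
          intro r₀ hr₀
          have h9 := hcon r₀ (Finset.mem_range.mp hr₀)
          exact h9
        obtain ⟨j, hj⟩ := hev.exists
        exact hj (mj j % k) (Finset.mem_range.mpr (Nat.mod_lt _ (by omega))) rfl
      obtain ⟨r₀, hr₀, hfr⟩ := hfreq
      have hz : z = y r₀ :=
        tendsto_nhds_unique_of_frequently_eq hlim2 tendsto_const_nhds
          (hfr.mono fun j hj => by rw [hmod (mj j), hj])
      exact ⟨r₀, by
        show P.f^[r₀] (y 0) = z
        rw [← hyit r₀]
        exact hz.symm⟩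
    · rintro z ⟨t, rfl⟩
      refine ⟨fun j => n + t + j * k, ?_, ?_⟩
      · intro a b hab
        exact Nat.add_lt_add_left (mul_lt_mul_of_pos_right hab (by omega : 0 < k)) _
      · show Filter.Tendsto (fun j => P.f^[n + t + j * k] x) Filter.atTop
          (nhds (P.f^[t] (y 0)))
        rw [← hyit t]
        exact hy t

end PCIM

/-- If `D ⊆ X̃` and `x ∈ X̃`, then `ω(x)` is a periodic orbit contained in `X̃` iff
`Δ_lr(x) = ∅`. -/
theorem stmt9 (P : PCIM) (hD : P.D ⊆ P.Xt) (x : ℝ) (hx : x ∈ P.Xt) :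
    (∃ p : ℝ, P.IsPeriodic p ∧ P.orbit p ⊆ P.Xt ∧ P.omega x = P.orbit p) ↔
      ∀ i, ¬ P.lrVisited x i := by
  constructor
  · rintro ⟨p, hper, hsub, heq⟩ i hlr
    obtain ⟨hi1, hiN, l, rr, hlmono, hrmono, hlp, hrp, hltend, hrtend⟩ := hlr
    have hci : P.c i ∈ P.omega x := ⟨l, hlmono, hltend⟩
    rw [heq] at hci
    have h0 := (hsub hci) 0
    rw [Function.iterate_zero_apply] at h0
    exact h0.2 ⟨i, hi1, hiN, rfl⟩
  · exact fun hno => P.asymptotically_periodic hD x hx hno
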